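/- Assume the hypotheses guaranteeing the algebraic relation: conditions (i) ∂_k u_1 = u_k' and 4·∂_{k+1}u_1 = u_k''' − 2u_1'u_k − 4u_1u_k'; (ii) ∂_i u_j = ∂_j u_i; (iii) u_k'u_i − u_i'u_k + 2∂_{i+1}u_k − 2∂_{k+1}u_i = 0; and equation (4mu) with real constants μ_1, …, μ_{2g}. Let Ψ : ℝ^g → ℂ be a smooth function, not identically zero, satisfying 𝓛Ψ = E·Ψ and 𝓤_iΨ = α_i·Ψ for all i = 1, …, g, where E ≠ 0 and α_1, …, α_g are complex constants. Then, with ξ = E⁻¹ and α(ξ) = ∑_{i=1}^g α_i ξ^i, one has 4·α(ξ)² = 4ξ⁻¹ + ∑_{i=1}^{2g} μ_i ξ^i. -/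

import Mathlib

open scoped BigOperators

/-- Partial derivative `∂_i` (1-based index) on functions of `t : Fin g → ℝ`;
`∂_i ≡ 0` for `i = 0` or `i > g` (in particular `∂_{g+1} ≡ 0`). -/
noncomputable def pd {g : ℕ} {E : Type*} [NormedAddCommGroup E] [NormedSpace ℝ E]
    (i : ℕ) (f : (Fin g → ℝ) → E) : (Fin g → ℝ) → E :=
  fun t => if h : 1 ≤ i ∧ i ≤ g then
    fderiv ℝ f t (Pi.single (⟨i - 1, by omega⟩ : Fin g) 1) else 0

/-- The Schrödinger operator `𝓛 f = ∂_x² f − u₁·f` on complex-valued functions. -/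
noncomputable def opLC {g : ℕ} (u : ℕ → (Fin g → ℝ) → ℝ)
    (f : (Fin g → ℝ) → ℂ) : (Fin g → ℝ) → ℂ :=
  fun t => pd 1 (pd 1 f) t - u 1 t • f t

/-- `𝓐_k f = ∂_x²∂_k f − (1/2)(u₁·∂_k f + ∂_k(u₁·f)) − (1/4)(u_k·∂_x f + ∂_x(u_k·f))`
on complex-valued functions. -/
noncomputable def opAC {g : ℕ} (u : ℕ → (Fin g → ℝ) → ℝ) (k : ℕ)
    (f : (Fin g → ℝ) → ℂ) : (Fin g → ℝ) → ℂ :=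
  fun t => pd 1 (pd 1 (pd k f)) t
    - (1/2 : ℝ) • (u 1 t • pd k f t + pd k (fun s => u 1 s • f s) t)
    - (1/4 : ℝ) • (u k t • pd 1 f t + pd 1 (fun s => u k s • f s) t)

/-- `𝓤_k f = 𝓐_k f − ∂_{k+1} f` on complex-valued functions. -/
noncomputable def opUC {g : ℕ} (u : ℕ → (Fin g → ℝ) → ℝ) (k : ℕ)
    (f : (Fin g → ℝ) → ℂ) : (Fin g → ℝ) → ℂ :=
  fun t => opAC u k f t - pd (k+1) f t

/-- The generating function `𝐮(ξ) = ∑_{i=1}^g u_i ξ^i`. -/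
noncomputable def bfu {g : ℕ} (u : ℕ → (Fin g → ℝ) → ℝ) (ξ : ℝ) :
    (Fin g → ℝ) → ℝ :=
  fun t => ∑ i ∈ Finset.Icc 1 g, u i t * ξ ^ i

/-- `𝐮'(ξ) = ∑_{i=1}^g u_i' ξ^i` (prime is `∂_x = ∂_1`). -/
noncomputable def bfu1 {g : ℕ} (u : ℕ → (Fin g → ℝ) → ℝ) (ξ : ℝ) :
    (Fin g → ℝ) → ℝ :=
  fun t => ∑ i ∈ Finset.Icc 1 g, pd 1 (u i) t * ξ ^ i

/-- `𝐮''(ξ) = ∑_{i=1}^g u_i'' ξ^i`. -/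
noncomputable def bfu2 {g : ℕ} (u : ℕ → (Fin g → ℝ) → ℝ) (ξ : ℝ) :
    (Fin g → ℝ) → ℝ :=
  fun t => ∑ i ∈ Finset.Icc 1 g, pd 1 (pd 1 (u i)) t * ξ ^ i

/-- `𝐮'''(ξ) = ∑_{i=1}^g u_i''' ξ^i`. -/
noncomputable def bfu3 {g : ℕ} (u : ℕ → (Fin g → ℝ) → ℝ) (ξ : ℝ) :
    (Fin g → ℝ) → ℝ :=
  fun t => ∑ i ∈ Finset.Icc 1 g, pd 1 (pd 1 (pd 1 (u i))) t * ξ ^ i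


/-!
On an eigenfunction `𝓛Ψ = EΨ` one can replace `∂_x²∂_kΨ` by `∂_k((E + u₁)Ψ)`, and with
`∂_k u₁ = u_k'` the third-order operator `𝓤_k` becomes the first-order operator
`E∂_k − ∂_{k+1} − ½u_k∂_x + ¼u_k'`. Multiplying by `ξ^k` with `ξ = E⁻¹` and summing telescopes
the first two terms, giving `(1 − 𝐮/2)Ψ' + ¼𝐮'Ψ = α(ξ)Ψ`. Differentiating this once more in `x`,
substituting `Ψ'' = (E + u₁)Ψ` and eliminating `Ψ'` at a point where `Ψ ≠ 0` yields
`16α(ξ)² = 𝐮'² + 2𝐮''(2 − 𝐮) + 4(ξ⁻¹ + u₁)(2 − 𝐮)²`, which (4mu) evaluates. Since `ξ` may be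
complex, (4mu) is first extended from real to complex `ξ`: multiplied by `ξ` it is a polynomial
identity.
-/

open Finset

section PartialDerivative

variable {g : ℕ} {F : Type*} [NormedAddCommGroup F] [NormedSpace ℝ F]

lemma pd_of_mem {i : ℕ} (hi : 1 ≤ i ∧ i ≤ g) (f : (Fin g → ℝ) → F) (t : Fin g → ℝ) :
    pd i f t = fderiv ℝ f t (Pi.single (⟨i - 1, by omega⟩ : Fin g) 1) :=
  dif_pos hi

lemma pd_of_not_mem {i : ℕ} (hi : ¬(1 ≤ i ∧ i ≤ g)) (f : (Fin g → ℝ) → F) : pd i f = 0 :=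
  funext fun _ => dif_neg hi

lemma pd_zero (i : ℕ) : pd i (0 : (Fin g → ℝ) → F) = 0 := by
  by_cases hi : 1 ≤ i ∧ i ≤ g
  · funext t
    simp [pd_of_mem hi]
  · exact pd_of_not_mem hi 0

lemma ContDiff.pd {f : (Fin g → ℝ) → F} (hf : ContDiff ℝ (⊤ : ℕ∞) f) (i : ℕ) :
    ContDiff ℝ (⊤ : ℕ∞) (pd i f) := by
  by_cases hi : 1 ≤ i ∧ i ≤ g
  · rw [funext (pd_of_mem hi f)]
    exact (hf.fderiv_right (m := (⊤ : ℕ∞)) le_rfl).clm_apply contDiff_const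
  · rw [pd_of_not_mem hi]
    exact contDiff_const

lemma pd_comm {f : (Fin g → ℝ) → F} (hf : ContDiff ℝ (⊤ : ℕ∞) f) (i j : ℕ) (t : Fin g → ℝ) :
    pd i (pd j f) t = pd j (pd i f) t := by
  by_cases hi : 1 ≤ i ∧ i ≤ g
  · by_cases hj : 1 ≤ j ∧ j ≤ g
    · have hf' : ContDiff ℝ (⊤ : ℕ∞) (fderiv ℝ f) := hf.fderiv_right (m := (⊤ : ℕ∞)) le_rfl
      have pd_pd : ∀ (v w : Fin g → ℝ),
          fderiv ℝ (fun s => fderiv ℝ f s v) t w = fderiv ℝ (fderiv ℝ f) t w v := fun v w => by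
        rw [fderiv_clm_apply (hf'.differentiable (by simp) t) (differentiableAt_const v)]
        simp
      simp only [pd_of_mem hi, pd_of_mem hj, funext (pd_of_mem hi f), funext (pd_of_mem hj f),
        pd_pd]
      exact hf.contDiffAt.isSymmSndFDerivAt (by simpa using ENat.LEInfty.out) _ _
    · simp [pd_of_not_mem hj, pd_zero]
  · simp [pd_of_not_mem hi, pd_zero]

variable {f f' : (Fin g → ℝ) → F} {t : Fin g → ℝ}

lemma pd_add (i : ℕ) (hf : DifferentiableAt ℝ f t) (hf' : DifferentiableAt ℝ f' t) :
    pd i (fun s => f s + f' s) t = pd i f t + pd i f' t := by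
  by_cases hi : 1 ≤ i ∧ i ≤ g
  · simp [pd_of_mem hi, fderiv_fun_add hf hf']
  · simp [pd_of_not_mem hi]

lemma pd_sub (i : ℕ) (hf : DifferentiableAt ℝ f t) (hf' : DifferentiableAt ℝ f' t) :
    pd i (fun s => f s - f' s) t = pd i f t - pd i f' t := by
  by_cases hi : 1 ≤ i ∧ i ≤ g
  · simp [pd_of_mem hi, fderiv_fun_sub hf hf']
  · simp [pd_of_not_mem hi]

lemma pd_smul (i : ℕ) {c : (Fin g → ℝ) → ℝ} (hc : DifferentiableAt ℝ c t)
    (hf : DifferentiableAt ℝ f t) :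
    pd i (fun s => c s • f s) t = pd i c t • f t + c t • pd i f t := by
  by_cases hi : 1 ≤ i ∧ i ≤ g
  · simp [pd_of_mem hi, fderiv_fun_smul hc hf, add_comm]
  · simp [pd_of_not_mem hi]

lemma pd_const_mul {𝔸 : Type*} [NormedRing 𝔸] [NormedAlgebra ℝ 𝔸] (i : ℕ)
    {f : (Fin g → ℝ) → 𝔸} (hf : DifferentiableAt ℝ f t) (b : 𝔸) :
    pd i (fun s => b * f s) t = b * pd i f t := by
  by_cases hi : 1 ≤ i ∧ i ≤ g
  · simp [pd_of_mem hi, fderiv_const_mul hf b]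
  · simp [pd_of_not_mem hi]

end PartialDerivative

lemma sum_Icc_pow_mul_sub_eq {R : Type*} [CommRing R] {ξ E : R} (hξE : ξ * E = 1)
    (a : ℕ → R) (n : ℕ) :
    ∑ k ∈ Icc 1 n, ξ ^ k * (E * a k - a (k + 1)) = a 1 - ξ ^ n * a (n + 1) := by
  induction n with
  | zero => simp
  | succ n ih =>
    rw [sum_Icc_succ_top (by omega), ih]
    linear_combination ξ ^ n * a (n + 1) * hξE

section Eigenfunction

variable {g : ℕ} {u : ℕ → (Fin g → ℝ) → ℝ}

noncomputable def opUReduced (u : ℕ → (Fin g → ℝ) → ℝ) (E : ℂ) (k : ℕ)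
    (Φ : (Fin g → ℝ) → ℂ) : (Fin g → ℝ) → ℂ :=
  fun t => E * pd k Φ t - pd (k + 1) Φ t - (1 / 2 : ℂ) * (u k t • pd 1 Φ t)
    + (1 / 4 : ℂ) * (pd 1 (u k) t • Φ t)

lemma pd_one_pd_one_of_opLC {Ψ : (Fin g → ℝ) → ℂ} {E : ℂ} (hL : ∀ t, opLC u Ψ t = E * Ψ t) :
    pd 1 (pd 1 Ψ) = fun t => E * Ψ t + u 1 t • Ψ t :=
  funext fun t => sub_eq_iff_eq_add.mp (hL t)

lemma opUC_eq_opUReduced {Ψ : (Fin g → ℝ) → ℂ} {E : ℂ} {k : ℕ}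
    (hu₁ : ContDiff ℝ (⊤ : ℕ∞) (u 1)) (huₖ : ContDiff ℝ (⊤ : ℕ∞) (u k))
    (hΨ : ContDiff ℝ (⊤ : ℕ∞) Ψ) (hL : ∀ t, opLC u Ψ t = E * Ψ t)
    (hk : ∀ t, pd k (u 1) t = pd 1 (u k) t) (t : Fin g → ℝ) :
    opUC u k Ψ t = opUReduced u E k Ψ t := by
  have dΨ := hΨ.differentiable (by simp) t
  have du₁ := hu₁.differentiable (by simp) t
  have duₖ := huₖ.differentiable (by simp) t
  have hxxk : pd 1 (pd 1 (pd k Ψ)) t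
      = E * pd k Ψ t + (pd k (u 1) t • Ψ t + u 1 t • pd k Ψ t) := by
    rw [funext (pd_comm hΨ 1 k), pd_comm (hΨ.pd 1) 1 k, pd_one_pd_one_of_opLC hL,
      pd_add k (by fun_prop) (by fun_prop), pd_const_mul k dΨ, pd_smul k du₁ dΨ]
  simp only [opUC, opAC, opUReduced]
  rw [hxxk, pd_smul k du₁ dΨ, pd_smul 1 duₖ dΨ, hk t]
  simp only [Complex.real_smul]
  push_cast
  ring

lemma pd_one_opUReduced {Φ : (Fin g → ℝ) → ℂ} {E : ℂ} {k : ℕ}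
    (huₖ : ContDiff ℝ (⊤ : ℕ∞) (u k)) (hΦ : ContDiff ℝ (⊤ : ℕ∞) Φ) (t : Fin g → ℝ) :
    pd 1 (opUReduced u E k Φ) t = opUReduced u E k (pd 1 Φ) t
      - (1 / 2 : ℂ) * (pd 1 (u k) t • pd 1 Φ t) + (1 / 4 : ℂ) * (pd 1 (pd 1 (u k)) t • Φ t) := by
  have d : ∀ i, Differentiable ℝ (pd i Φ) := fun i => (hΦ.pd i).differentiable (by simp)
  have dΦ : Differentiable ℝ Φ := hΦ.differentiable (by simp)
  have duₖ : Differentiable ℝ (u k) := huₖ.differentiable (by simp)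
  have duₖ' : Differentiable ℝ (pd 1 (u k)) := (huₖ.pd 1).differentiable (by simp)
  unfold opUReduced
  rw [pd_add 1 (by fun_prop) (by fun_prop), pd_sub 1 (by fun_prop) (by fun_prop),
    pd_sub 1 (by fun_prop) (by fun_prop), pd_const_mul 1 (by fun_prop),
    pd_const_mul 1 (by fun_prop), pd_const_mul 1 (by fun_prop),
    pd_smul 1 (by fun_prop) (by fun_prop), pd_smul 1 (by fun_prop) (by fun_prop),
    pd_comm hΦ 1 k, pd_comm hΦ 1 (k + 1)]
  simp only [Complex.real_smul]
  ring

lemma sum_pow_mul_opUReduced {E ξ : ℂ} (hξE : ξ * E = 1) (Φ : (Fin g → ℝ) → ℂ)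
    (t : Fin g → ℝ) :
    ∑ k ∈ Icc 1 g, ξ ^ k * opUReduced u E k Φ t
      = pd 1 Φ t - (∑ k ∈ Icc 1 g, (u k t : ℂ) * ξ ^ k) / 2 * pd 1 Φ t
        + (∑ k ∈ Icc 1 g, ((pd 1 (u k) t : ℝ) : ℂ) * ξ ^ k) / 4 * Φ t := by
  have htel := sum_Icc_pow_mul_sub_eq hξE (fun k => pd k Φ t) g
  rw [pd_of_not_mem (by omega : ¬(1 ≤ g + 1 ∧ g + 1 ≤ g)), Pi.zero_apply, mul_zero,
    sub_zero] at htel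
  calc ∑ k ∈ Icc 1 g, ξ ^ k * opUReduced u E k Φ t
      = ∑ k ∈ Icc 1 g, (ξ ^ k * (E * pd k Φ t - pd (k + 1) Φ t)
          - (1 / 2 : ℂ) * ((u k t : ℂ) * ξ ^ k * pd 1 Φ t)
          + (1 / 4 : ℂ) * (((pd 1 (u k) t : ℝ) : ℂ) * ξ ^ k * Φ t)) :=
        sum_congr rfl fun k _ => by simp only [opUReduced, Complex.real_smul]; ring
    _ = _ := by
        rw [sum_add_distrib, sum_sub_distrib, htel, ← mul_sum, ← mul_sum, ← sum_mul, ← sum_mul]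
        ring

lemma opUReduced_pd_one_of_eq {Ψ : (Fin g → ℝ) → ℂ} {E a : ℂ} {k : ℕ}
    (huₖ : ContDiff ℝ (⊤ : ℕ∞) (u k)) (hΨ : ContDiff ℝ (⊤ : ℕ∞) Ψ)
    (hΨₖ : ∀ s, opUReduced u E k Ψ s = a * Ψ s) (t : Fin g → ℝ) :
    opUReduced u E k (pd 1 Ψ) t = a * pd 1 Ψ t
      + (1 / 2 : ℂ) * (pd 1 (u k) t • pd 1 Ψ t) - (1 / 4 : ℂ) * (pd 1 (pd 1 (u k)) t • Ψ t) := by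
  have h := pd_one_opUReduced (E := E) huₖ hΨ t
  rw [funext hΨₖ, pd_const_mul 1 (hΨ.differentiable (by simp) t)] at h
  linear_combination -h

lemma generating_relation {Ψ : (Fin g → ℝ) → ℂ} {E ξ : ℂ} {α : ℕ → ℂ} {t : Fin g → ℝ}
    (hξE : ξ * E = 1) (hΨ : ∀ k ∈ Icc 1 g, opUReduced u E k Ψ t = α k * Ψ t) :
    pd 1 Ψ t - (∑ k ∈ Icc 1 g, (u k t : ℂ) * ξ ^ k) / 2 * pd 1 Ψ t
        + (∑ k ∈ Icc 1 g, ((pd 1 (u k) t : ℝ) : ℂ) * ξ ^ k) / 4 * Ψ t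
      = (∑ k ∈ Icc 1 g, α k * ξ ^ k) * Ψ t := by
  rw [← sum_pow_mul_opUReduced hξE, sum_mul]
  exact sum_congr rfl fun k hk => by rw [hΨ k hk]; ring

lemma generating_relation_pd_one {Ψ : (Fin g → ℝ) → ℂ} {E ξ : ℂ} {α : ℕ → ℂ}
    (hu : ∀ k, ContDiff ℝ (⊤ : ℕ∞) (u k)) (hΨ : ContDiff ℝ (⊤ : ℕ∞) Ψ) (hξE : ξ * E = 1)
    (hΨₖ : ∀ k ∈ Icc 1 g, ∀ s, opUReduced u E k Ψ s = α k * Ψ s) (t : Fin g → ℝ) :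
    pd 1 (pd 1 Ψ) t - (∑ k ∈ Icc 1 g, (u k t : ℂ) * ξ ^ k) / 2 * pd 1 (pd 1 Ψ) t
        + (∑ k ∈ Icc 1 g, ((pd 1 (u k) t : ℝ) : ℂ) * ξ ^ k) / 4 * pd 1 Ψ t
      = (∑ k ∈ Icc 1 g, α k * ξ ^ k) * pd 1 Ψ t
        + (∑ k ∈ Icc 1 g, ((pd 1 (u k) t : ℝ) : ℂ) * ξ ^ k) / 2 * pd 1 Ψ t
        - (∑ k ∈ Icc 1 g, ((pd 1 (pd 1 (u k)) t : ℝ) : ℂ) * ξ ^ k) / 4 * Ψ t := by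
  rw [← sum_pow_mul_opUReduced hξE]
  simp only [sum_mul, sum_div, ← sum_add_distrib, ← sum_sub_distrib]
  refine sum_congr rfl fun k hk => ?_
  rw [opUReduced_pd_one_of_eq (hu k) hΨ (hΨₖ k hk)]
  simp only [Complex.real_smul]
  ring

end Eigenfunction

section FourMu

open Polynomial

/-- Left minus right side of (4mu) at a fixed point, where `a i`, `b i`, `c i`, `v` are the values
of `u_i'`, `u_i''`, `u_i`, `u_1`. -/
noncomputable def fourMuDefect {K : Type*} [Field K] (g : ℕ) (a b c μ : ℕ → K) (v ξ : K) : K :=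
  (∑ i ∈ Icc 1 g, a i * ξ ^ i) ^ 2
    + 2 * (∑ i ∈ Icc 1 g, b i * ξ ^ i) * (2 - ∑ i ∈ Icc 1 g, c i * ξ ^ i)
    + 4 * (ξ⁻¹ + v) * (2 - ∑ i ∈ Icc 1 g, c i * ξ ^ i) ^ 2
    - (16 * ξ⁻¹ + 4 * ∑ i ∈ Icc 1 (2 * g), μ i * ξ ^ i)

noncomputable def fourMuPoly (g : ℕ) (a b c μ : ℕ → ℝ) (v : ℝ) : ℝ[X] :=
  X * (∑ i ∈ Icc 1 g, C (a i) * X ^ i) ^ 2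
    + 2 * X * (∑ i ∈ Icc 1 g, C (b i) * X ^ i) * (2 - ∑ i ∈ Icc 1 g, C (c i) * X ^ i)
    + 4 * (1 + C v * X) * (2 - ∑ i ∈ Icc 1 g, C (c i) * X ^ i) ^ 2
    - 16 - 4 * X * ∑ i ∈ Icc 1 (2 * g), C (μ i) * X ^ i

lemma aeval_fourMuPoly {A : Type*} [Field A] [Algebra ℝ A] {z : A} (hz : z ≠ 0) (g : ℕ)
    (a b c μ : ℕ → ℝ) (v : ℝ) :
    aeval z (fourMuPoly g a b c μ v)
      = z * fourMuDefect g (fun i => algebraMap ℝ A (a i)) (fun i => algebraMap ℝ A (b i))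
          (fun i => algebraMap ℝ A (c i)) (fun i => algebraMap ℝ A (μ i)) (algebraMap ℝ A v) z := by
  simp only [fourMuPoly, fourMuDefect, map_add, map_sub, map_mul, map_pow, map_sum, aeval_X,
    aeval_C, map_ofNat, map_one]
  field_simp
  ring

lemma fourMuDefect_ofReal_eq_zero {g : ℕ} {a b c μ : ℕ → ℝ} {v : ℝ}
    (h : ∀ x : ℝ, x ≠ 0 → fourMuDefect g a b c μ v x = 0) {z : ℂ} (hz : z ≠ 0) :
    fourMuDefect g (fun i => (a i : ℂ)) (fun i => (b i : ℂ)) (fun i => (c i : ℂ))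
      (fun i => (μ i : ℂ)) (v : ℂ) z = 0 := by
  have hP : fourMuPoly g a b c μ v = 0 := by
    refine eq_zero_of_infinite_isRoot _ ((Set.finite_singleton 0).infinite_compl.mono ?_)
    intro x hx
    rw [Set.mem_ofPred_eq, IsRoot.def, ← coe_aeval_eq_eval, aeval_fourMuPoly hx]
    simp only [Algebra.algebraMap_self, RingHom.id_apply, h x hx, mul_zero]
  have hz' := aeval_fourMuPoly hz g a b c μ v
  rw [hP, map_zero, Complex.coe_algebraMap] at hz'
  exact (mul_eq_zero.mp hz'.symm).resolve_left hz

end FourMu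

/-- `p, q, r` stand for `Ψ, Ψ', Ψ''` at a point and `U, U₁, U₂` for `𝐮, 𝐮', 𝐮''` at `ξ`. -/
lemma four_mul_sq_eq_of_relations {K : Type*} [Field K] [CharZero K] {p q r v ξ A U U₁ U₂ M : K}
    (hp : p ≠ 0) (h₁ : q - U / 2 * q + U₁ / 4 * p = A * p)
    (h₂ : r - U / 2 * r + U₁ / 4 * q = A * q + U₁ / 2 * q - U₂ / 4 * p)
    (hr : r = (ξ⁻¹ + v) * p)
    (h4mu : U₁ ^ 2 + 2 * U₂ * (2 - U) + 4 * (ξ⁻¹ + v) * (2 - U) ^ 2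
      - (16 * ξ⁻¹ + 4 * M) = 0) :
    4 * A ^ 2 = 4 * ξ⁻¹ + M := by
  -- `h₁` reads `(1 - U/2) q = (A - U₁/4) p`, so `(1 - U/2) h₂` eliminates `q`.
  have key : p * (4 * A ^ 2 - (4 * ξ⁻¹ + M)) = 0 := by
    linear_combination (-4) * ((1 - U / 2) * h₂ + (A + U₁ / 4) * h₁ - (1 - U / 2) ^ 2 * hr)
      + p / 4 * h4mu
  exact sub_eq_zero.mp ((mul_eq_zero.mp key).resolve_left hp)

theorem statement7_general (g : ℕ) (u : ℕ → (Fin g → ℝ) → ℝ)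
    (hu : ∀ i, ContDiff ℝ (⊤ : ℕ∞) (u i))
    (hcond1 : ∀ k, 1 ≤ k → k ≤ g → ∀ t, pd k (u 1) t = pd 1 (u k) t)
    (μ : ℕ → ℝ)
    (h4mu : ∀ t, ∀ ξ : ℝ, ξ ≠ 0 →
      bfu1 u ξ t ^ 2 + 2 * bfu2 u ξ t * (2 - bfu u ξ t)
        + 4 * (ξ⁻¹ + u 1 t) * (2 - bfu u ξ t) ^ 2
      = 16 * ξ⁻¹ + 4 * ∑ i ∈ Finset.Icc 1 (2*g), μ i * ξ ^ i)
    (Ψ : (Fin g → ℝ) → ℂ) (hΨ : ContDiff ℝ (⊤ : ℕ∞) Ψ)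
    (hΨne : ∃ t, Ψ t ≠ 0)
    (E : ℂ) (hE : E ≠ 0) (α : ℕ → ℂ)
    (hL : ∀ t, opLC u Ψ t = E * Ψ t)
    (hU : ∀ i, 1 ≤ i → i ≤ g → ∀ t, opUC u i Ψ t = α i * Ψ t) :
    ∀ ξ : ℂ, ξ = E⁻¹ →
      4 * (∑ i ∈ Finset.Icc 1 g, α i * ξ ^ i) ^ 2
        = 4 * ξ⁻¹ + ∑ i ∈ Finset.Icc 1 (2*g), (μ i : ℂ) * ξ ^ i := by
  rintro ξ rfl
  obtain ⟨t, hΨt⟩ := hΨne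
  have hξE : E⁻¹ * E = 1 := inv_mul_cancel₀ hE
  have hΨₖ : ∀ k ∈ Icc 1 g, ∀ s, opUReduced u E k Ψ s = α k * Ψ s := fun k hk s => by
    obtain ⟨hk₁, hk₂⟩ := mem_Icc.mp hk
    rw [← opUC_eq_opUReduced (hu 1) (hu k) hΨ hL (hcond1 k hk₁ hk₂), hU k hk₁ hk₂]
  refine four_mul_sq_eq_of_relations hΨt (generating_relation hξE fun k hk => hΨₖ k hk t)
    (generating_relation_pd_one hu hΨ hξE hΨₖ t) ?_
    (fourMuDefect_ofReal_eq_zero (fun x hx => sub_eq_zero.mpr (h4mu t x hx)) (inv_ne_zero hE))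
  simp only [inv_inv, pd_one_pd_one_of_opLC hL, Complex.real_smul]
  ring

/-- Under conditions (i), (ii), (iii) and equation (4mu) with real
constants `μ_1, …, μ_{2g}`: if `Ψ` is a smooth common eigenfunction, not identically
zero, with `𝓛Ψ = E·Ψ` (`E ≠ 0`) and `𝓤_iΨ = α_i·Ψ` for `i = 1, …, g`, then with
`ξ = E⁻¹` and `α(ξ) = ∑ α_i ξ^i` one has `4·α(ξ)² = 4ξ⁻¹ + ∑_{i=1}^{2g} μ_i ξ^i`. -/
theorem statement7 (g : ℕ) (hg : 1 ≤ g) (u : ℕ → (Fin g → ℝ) → ℝ)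
    (hu : ∀ i, ContDiff ℝ (⊤ : ℕ∞) (u i))
    (hcond1 : ∀ k, 1 ≤ k → k ≤ g → ∀ t, pd k (u 1) t = pd 1 (u k) t)
    (hcond2 : ∀ k, 1 ≤ k → k ≤ g → ∀ t,
      4 * pd (k+1) (u 1) t
        = pd 1 (pd 1 (pd 1 (u k))) t - 2 * pd 1 (u 1) t * u k t - 4 * u 1 t * pd 1 (u k) t)
    (hcond3 : ∀ i, 1 ≤ i → i ≤ g → ∀ j, 1 ≤ j → j ≤ g → ∀ t, pd i (u j) t = pd j (u i) t)
    (hcond4 : ∀ i, 1 ≤ i → i ≤ g → ∀ k, 1 ≤ k → k ≤ g → ∀ t,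
      pd 1 (u k) t * u i t - pd 1 (u i) t * u k t
        + 2 * pd (i+1) (u k) t - 2 * pd (k+1) (u i) t = 0)
    (μ : ℕ → ℝ)
    (h4mu : ∀ t, ∀ ξ : ℝ, ξ ≠ 0 →
      bfu1 u ξ t ^ 2 + 2 * bfu2 u ξ t * (2 - bfu u ξ t)
        + 4 * (ξ⁻¹ + u 1 t) * (2 - bfu u ξ t) ^ 2
      = 16 * ξ⁻¹ + 4 * ∑ i ∈ Finset.Icc 1 (2*g), μ i * ξ ^ i)
    (Ψ : (Fin g → ℝ) → ℂ) (hΨ : ContDiff ℝ (⊤ : ℕ∞) Ψ)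
    (hΨne : ∃ t, Ψ t ≠ 0)
    (E : ℂ) (hE : E ≠ 0) (α : ℕ → ℂ)
    (hL : ∀ t, opLC u Ψ t = E * Ψ t)
    (hU : ∀ i, 1 ≤ i → i ≤ g → ∀ t, opUC u i Ψ t = α i * Ψ t) :
    ∀ ξ : ℂ, ξ = E⁻¹ →
      4 * (∑ i ∈ Finset.Icc 1 g, α i * ξ ^ i) ^ 2
        = 4 * ξ⁻¹ + ∑ i ∈ Finset.Icc 1 (2*g), (μ i : ℂ) * ξ ^ i :=
  statement7_general g u hu hcond1 μ h4mu Ψ hΨ hΨne E hE α hL hU
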